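/- arXiv:1910.01073 — 5 statements merged into one kernel-verified Lean document; each statement's English description precedes it below -/
import Mathlib

section
/- For real numbers x and y, if y lies in the interval [-x - log 10, -x + log 10] and |x| ≥ log n for some n ≥ 2 (with the parameter λ = 1, i.e., |x| ≥ log n), then max{cosh(x)/cosh(y), cosh(y)/cosh(x)} ≤ 11. -/
open Real

/- Both exponentials in `cosh a = (exp a + exp (-a)) / 2` exceed the corresponding ones of
`cosh b` by a factor of at most `exp |a - b|`. -/
lemma cosh_le_exp_abs_sub_mul_cosh (a b : ℝ) : cosh a ≤ exp |a - b| * cosh b := by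
  have hpos : exp a ≤ exp |a - b| * exp b := by
    rw [← exp_add]; exact exp_le_exp.2 (by linarith [le_abs_self (a - b)])
  have hneg : exp (-a) ≤ exp |a - b| * exp (-b) := by
    rw [← exp_add]; exact exp_le_exp.2 (by linarith [neg_abs_le (a - b)])
  rw [cosh_eq, cosh_eq]
  linarith

lemma cosh_div_cosh_le_exp_abs_sub (a b : ℝ) : cosh a / cosh b ≤ exp |a - b| :=
  (div_le_iff₀ (cosh_pos b)).2 (cosh_le_exp_abs_sub_mul_cosh a b)

lemma cosh_div_cosh_le_of_abs_add_le_log {x y c : ℝ} (hc : 0 < c) (h : |x + y| ≤ log c) :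
    cosh x / cosh y ≤ c := by
  rw [← cosh_neg y, ← exp_log hc]
  calc cosh x / cosh (-y) ≤ exp |x - -y| := cosh_div_cosh_le_exp_abs_sub x (-y)
    _ ≤ exp (log c) := exp_le_exp.2 (by rwa [sub_neg_eq_add])

theorem stmt0_general (x y : ℝ)
    (hy : y ∈ Set.Icc (-x - Real.log 10) (-x + Real.log 10)) :
    max (Real.cosh x / Real.cosh y) (Real.cosh y / Real.cosh x) ≤ 11 := by
  obtain ⟨hlo, hhi⟩ := hy
  have hxy : |x + y| ≤ log 10 := abs_le.2 ⟨by linarith, by linarith⟩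
  have hyx : |y + x| ≤ log 10 := by rwa [add_comm]
  exact max_le
    ((cosh_div_cosh_le_of_abs_add_le_log (by norm_num) hxy).trans (by norm_num))
    ((cosh_div_cosh_le_of_abs_add_le_log (by norm_num) hyx).trans (by norm_num))

theorem stmt0 (n : ℕ) (hn : 2 ≤ n) (x y : ℝ)
    (hx : Real.log n ≤ |x|)
    (hy : y ∈ Set.Icc (-x - Real.log 10) (-x + Real.log 10)) :
    max (Real.cosh x / Real.cosh y) (Real.cosh y / Real.cosh x) ≤ 11 :=
  stmt0_general x y hy
end

section
/- For real numbers x and y with |x| ≥ log n (for n ≥ 2) and y NOT in the interval [-x - log 10, -x + log 10], we have |sinh(x) + sinh(y)| ≥ (8/9) · max{|sinh(x)|, |sinh(y)|}. -/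
/-!
If `x` and `y` have the same sign, so do `sinh x` and `sinh y`, and their sum does not cancel.
Otherwise, say with `|y| ≤ |x|`, we have `|x| = |y| + |x + y|`, and `sinh (b + c) ≥ exp c * sinh b`
shows `|sinh y| ≤ exp (-|x + y|) * |sinh x|`; outside the dangerous set `exp (-|x + y|) < 1 / 10`.
-/

section LinearOrderedRing

variable {α : Type*} [Ring α] [LinearOrder α] [IsStrictOrderedRing α] {a b : α}

theorem max_abs_le_abs_add_of_mul_nonneg (h : 0 ≤ a * b) : max |a| |b| ≤ |a + b| := by
  rw [(abs_add_eq_add_abs_iff a b).2 (mul_nonneg_iff.1 h)]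
  exact max_le (le_add_of_nonneg_right (abs_nonneg b)) (le_add_of_nonneg_left (abs_nonneg a))

theorem abs_add_eq_abs_sub_abs_of_mul_nonpos (h : a * b ≤ 0) (hba : |b| ≤ |a|) :
    |a + b| = |a| - |b| := by
  rcases mul_nonpos_iff.1 h with ⟨ha, hb⟩ | ⟨ha, hb⟩
  · rw [abs_of_nonneg ha, abs_of_nonpos hb] at hba ⊢
    rw [abs_of_nonneg (neg_le_iff_add_nonneg.1 hba), sub_neg_eq_add]
  · rw [abs_of_nonpos ha, abs_of_nonneg hb] at hba ⊢
    rw [abs_of_nonpos (le_neg_iff_add_nonpos_left.1 hba), neg_add']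

end LinearOrderedRing

namespace Real

theorem sinh_mul_sinh_nonneg {x y : ℝ} (h : 0 ≤ x * y) : 0 ≤ sinh x * sinh y := by
  rcases mul_nonneg_iff.1 h with ⟨hx, hy⟩ | ⟨hx, hy⟩
  · exact mul_nonneg (sinh_nonneg_iff.2 hx) (sinh_nonneg_iff.2 hy)
  · exact mul_nonneg_of_nonpos_of_nonpos (sinh_nonpos_iff.2 hx) (sinh_nonpos_iff.2 hy)

theorem exp_mul_sinh_le_sinh_add (b : ℝ) {c : ℝ} (hc : 0 ≤ c) : exp c * sinh b ≤ sinh (b + c) := by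
  have h : sinh (b + c) = exp c * sinh b + sinh c * exp (-b) := by
    rw [sinh_add, ← cosh_add_sinh, ← cosh_sub_sinh]
    ring
  rw [h]
  exact le_add_of_nonneg_right (mul_nonneg (sinh_nonneg_iff.2 hc) (exp_pos _).le)

theorem exp_mul_abs_sinh_le_abs_sinh {a b c : ℝ} (hc : 0 ≤ c) (h : |b| + c ≤ |a|) :
    exp c * |sinh b| ≤ |sinh a| := by
  rw [abs_sinh, abs_sinh]
  exact (exp_mul_sinh_le_sinh_add _ hc).trans (sinh_le_sinh.2 h)

theorem one_sub_exp_neg_mul_max_abs_sinh_le (x y : ℝ) :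
    (1 - exp (-|x + y|)) * max |sinh x| |sinh y| ≤ |sinh x + sinh y| := by
  wlog hyx : |y| ≤ |x| generalizing x y
  · rw [add_comm x, add_comm (sinh x), max_comm]
    exact this y x (le_of_not_ge hyx)
  rcases le_total 0 (x * y) with hxy | hxy
  · calc (1 - exp (-|x + y|)) * max |sinh x| |sinh y|
        ≤ max |sinh x| |sinh y| :=
          mul_le_of_le_one_left (le_max_of_le_left (abs_nonneg _)) (sub_le_self _ (exp_pos _).le)
      _ ≤ |sinh x + sinh y| := max_abs_le_abs_add_of_mul_nonneg (sinh_mul_sinh_nonneg hxy)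
  · have hsum : |y| + |x + y| ≤ |x| := by
      rw [abs_add_eq_abs_sub_abs_of_mul_nonpos hxy hyx, add_sub_cancel]
    have hsinh : exp |x + y| * |sinh y| ≤ |sinh x| := exp_mul_abs_sinh_le_abs_sinh (abs_nonneg _) hsum
    have hmax : max |sinh x| |sinh y| = |sinh x| := by
      rw [max_eq_left_iff, abs_sinh, abs_sinh]
      exact sinh_le_sinh.2 hyx
    have hy : |sinh y| ≤ exp (-|x + y|) * |sinh x| := by
      rw [exp_neg, ← div_eq_inv_mul, le_div_iff₀ (exp_pos _), mul_comm]
      exact hsinh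
    rw [hmax]
    calc (1 - exp (-|x + y|)) * |sinh x| = |sinh x| - exp (-|x + y|) * |sinh x| := by ring
      _ ≤ |sinh x| - |sinh y| := by linarith
      _ ≤ |sinh x + sinh y| := abs_sub_abs_le_abs_add _ _

end Real

theorem stmt2_general (x y : ℝ)
    (hy : y ∉ Set.Icc (-x - Real.log 10) (-x + Real.log 10)) :
    (8 / 9 : ℝ) * max |Real.sinh x| |Real.sinh y| ≤ |Real.sinh x + Real.sinh y| := by
  have hxy : Real.log 10 < |x + y| := by
    rw [Set.mem_Icc, not_and_or, not_le, not_le] at hy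
    rw [lt_abs]
    rcases hy with hy | hy
    · right; linarith
    · left; linarith
  have hexp : 8 / 9 ≤ 1 - Real.exp (-|x + y|) := by
    have h := Real.exp_lt_exp.2 (neg_lt_neg hxy)
    rw [Real.exp_neg (Real.log 10), Real.exp_log (by norm_num)] at h
    linarith
  calc (8 / 9 : ℝ) * max |Real.sinh x| |Real.sinh y|
      ≤ (1 - Real.exp (-|x + y|)) * max |Real.sinh x| |Real.sinh y| := by gcongr
    _ ≤ |Real.sinh x + Real.sinh y| := Real.one_sub_exp_neg_mul_max_abs_sinh_le x y

theorem stmt2 (n : ℕ) (hn : 2 ≤ n) (x y : ℝ)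
    (hx : Real.log n ≤ |x|)
    (hy : y ∉ Set.Icc (-x - Real.log 10) (-x + Real.log 10)) :
    (8 / 9 : ℝ) * max |Real.sinh x| |Real.sinh y| ≤ |Real.sinh x + Real.sinh y| :=
  stmt2_general x y hy
end

section
/- Let n be a natural number, S ⊆ {1,...,n} a set of items, and v : {1,...,n} → [0,1] a valuation with v strictly decreasing (v₁ > v₂ > ... > vₙ). Then v(complement of S) - v(S) ≤ max over t ∈ {0,...,n} of (|complement(S) ∩ [t]| - |S ∩ [t]|), i.e., the cardinal envy is upper-bounded by the ordinal envy. -/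
/-!
Writing the cardinal difference as `∑ i, e i * v i` with signs `e i = ±1` (`-1` exactly on `S`),
Abel summation expresses it as a combination of the partial sums `∑ i < t, e i`, which are the
ordinal differences, with the nonnegative weights `v t - v (t + 1)` and `v (n - 1)`. These weights
add up to `v 0 ≤ 1`, and the largest ordinal difference is nonnegative (take `t = 0`), so the sum
is at most that largest difference.
-/

open Finset

theorem sum_range_mul_le_mul_of_sum_range_le {R : Type*} [CommRing R] [LinearOrder R]
    [IsStrictOrderedRing R] (n : ℕ) {e w : ℕ → R} {M : R} (hw : Antitone w) (hwn : 0 ≤ w n)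
    (he : ∀ t ≤ n, ∑ i ∈ range t, e i ≤ M) :
    ∑ i ∈ range n, e i * w i ≤ M * w 0 := by
  induction n generalizing e w M with
  | zero => simpa using mul_nonneg (by simpa using he 0 le_rfl) hwn
  | succ n ih =>
    have he₀ : e 0 ≤ M := by simpa using he 1 (by omega)
    have htail : ∑ i ∈ range n, e (i + 1) * w (i + 1) ≤ (M - e 0) * w 1 :=
      ih (hw.comp_monotone fun _ _ h => Nat.add_le_add_right h 1) hwn fun t ht => by
        have := he (t + 1) (by omega)
        rw [sum_range_succ'] at this
        linarith
    have hw₁ : (M - e 0) * w 1 ≤ (M - e 0) * w 0 :=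
      mul_le_mul_of_nonneg_left (hw (Nat.zero_le 1)) (sub_nonneg.mpr he₀)
    rw [sum_range_succ']
    linarith

namespace Fin

variable {n : ℕ} {α : Type*}

def extendByZero [Zero α] (f : Fin n → α) (i : ℕ) : α :=
  if h : i < n then f ⟨i, h⟩ else 0

theorem extendByZero_mem [Zero α] {f : Fin n → α} {s : Set α} (h0 : 0 ∈ s)
    (hf : ∀ i, f i ∈ s) (i : ℕ) : extendByZero f i ∈ s := by
  unfold extendByZero
  split <;> simp [*]

theorem extendByZero_mul [MulZeroClass α] (f g : Fin n → α) (i : ℕ) :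
    extendByZero (f * g) i = extendByZero f i * extendByZero g i := by
  unfold extendByZero
  split <;> simp

theorem antitone_extendByZero [Preorder α] [Zero α] {f : Fin n → α} (hf : Antitone f)
    (hf₀ : ∀ i, 0 ≤ f i) : Antitone (extendByZero f) := by
  intro i j hij
  unfold extendByZero
  split_ifs with hj hi hi
  · exact hf (Fin.mk_le_mk.mpr hij)
  · omega
  · exact hf₀ _
  · rfl

theorem sum_range_extendByZero [AddCommMonoid α] (f : Fin n → α) (t : ℕ) :
    ∑ i ∈ range t, extendByZero f i = ∑ i with i.val < t, f i := calc
  _ = ∑ i ∈ range n, if i < t then extendByZero f i else 0 := by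
    rw [← sum_filter, ← sum_filter_of_ne (p := (· < n)) fun i _ hi => by
      by_contra h
      simp [extendByZero, h] at hi]
    congr 1
    ext
    simp only [mem_filter, mem_range]
    omega
  _ = ∑ i : Fin n, if i.val < t then extendByZero f i else 0 :=
    (Fin.sum_univ_eq_sum_range _ n).symm
  _ = _ := by simp [sum_filter, extendByZero]

end Fin

section Signs

variable {ι R : Type*} [Fintype ι] [DecidableEq ι] [CommRing R] (S : Finset ι)

theorem sum_compl_sub_sum_eq_sum_ite_neg_one_one_mul (v : ι → R) :
    ∑ i ∈ Sᶜ, v i - ∑ i ∈ S, v i = ∑ i, (if i ∈ S then -1 else 1) * v i := by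
  simp only [ite_mul, neg_one_mul, one_mul, sum_ite, sum_neg_distrib, filter_mem_eq_inter,
    univ_inter, filter_not, ← compl_eq_univ_sdiff]
  ring

theorem card_filter_not_mem_sub_card_filter_mem_eq_sum (p : ι → Prop) [DecidablePred p] :
    (((univ.filter fun i => p i ∧ i ∉ S).card : ℤ) : R)
        - (((univ.filter fun i => p i ∧ i ∈ S).card : ℤ) : R) = ∑ i with p i, (if i ∈ S then -1 else 1) := by
  rw [sum_ite, filter_filter, filter_filter]
  push_cast
  simp only [sum_const, nsmul_eq_mul, mul_neg, mul_one]
  ring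

end Signs

theorem sum_compl_sub_sum_le_of_card_filter_sub_card_filter_le {R : Type*} [CommRing R]
    [LinearOrder R] [IsStrictOrderedRing R] {n : ℕ} (S : Finset (Fin n)) {v : Fin n → R}
    (hv : ∀ i, v i ∈ Set.Icc (0 : R) 1) (hanti : Antitone v) {M : R}
    (hM : ∀ t ≤ n, (((univ.filter fun i : Fin n => i.val < t ∧ i ∉ S).card : ℤ) : R)
        - (((univ.filter fun i : Fin n => i.val < t ∧ i ∈ S).card : ℤ) : R) ≤ M) :
    ∑ i ∈ Sᶜ, v i - ∑ i ∈ S, v i ≤ M := by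
  set sign : Fin n → R := fun i => if i ∈ S then -1 else 1
  set w := Fin.extendByZero v
  have hw : ∀ i, w i ∈ Set.Icc (0 : R) 1 := Fin.extendByZero_mem (by simp) hv
  have hpartial : ∀ t ≤ n, ∑ i ∈ range t, Fin.extendByZero sign i ≤ M := fun t ht => by
    rw [Fin.sum_range_extendByZero, ← card_filter_not_mem_sub_card_filter_mem_eq_sum]
    exact hM t ht
  have hM₀ : 0 ≤ M := by simpa using hpartial 0 n.zero_le
  calc ∑ i ∈ Sᶜ, v i - ∑ i ∈ S, v i
      = ∑ i ∈ range n, Fin.extendByZero sign i * w i := by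
        simp only [w, ← Fin.extendByZero_mul, Fin.sum_range_extendByZero, Fin.is_lt,
          filter_true, sum_compl_sub_sum_eq_sum_ite_neg_one_one_mul, sign, Pi.mul_apply]
    _ ≤ M * w 0 := sum_range_mul_le_mul_of_sum_range_le n
        (Fin.antitone_extendByZero hanti fun i => (hv i).1) (hw n).1 hpartial
    _ ≤ M := mul_le_of_le_one_right hM₀ (hw 0).2

theorem stmt9 (n : ℕ) (S : Finset (Fin n)) (v : Fin n → ℝ)
    (hv : ∀ i, v i ∈ Set.Icc (0 : ℝ) 1) (hdec : StrictAnti v) :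
    (∑ i ∈ Sᶜ, v i) - ∑ i ∈ S, v i ≤
      (((Finset.range (n + 1)).sup' ⟨0, Finset.mem_range.mpr (Nat.succ_pos n)⟩ fun t =>
        ((Finset.univ.filter fun i : Fin n => i.val < t ∧ i ∉ S).card : ℤ)
          - ((Finset.univ.filter fun i : Fin n => i.val < t ∧ i ∈ S).card : ℤ)) : ℝ) :=
  sum_compl_sub_sum_le_of_card_filter_sub_card_filter_le S hv hdec.antitone fun _ ht =>
    le_sup'_of_le _ (mem_range_succ_iff.mpr ht) le_rfl
end

section
/- Let S ⊆ {1,...,n}, and let envy_O(S) = max over t ∈ {0,...,n} of (|complement(S) ∩ [t]| - |S ∩ [t]|). For every δ > 0 there exists a strictly decreasing valuation v : {1,...,n} → [0,1] such that v(complement S) - v(S) ≥ envy_O(S) - δ. -/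
/-!
Let `t` attain the maximum in `envy_O(S)`. A strictly decreasing valuation within `η` of the
indicator of `[t]` has cardinal envy within `n η` of `|Sᶜ ∩ [t]| - |S ∩ [t]|`; such a valuation
is a convex combination `(1 - η) 𝟙[t] + η r` with any strictly decreasing `r` in `[0, 1]`.
-/

open Finset

section Perturbation

variable {ι : Type*} [Fintype ι] [DecidableEq ι]

theorem le_sum_compl_sub_sum_of_abs_sub_le {v w : ι → ℝ} {η : ℝ} (S : Finset ι)
    (h : ∀ i, |v i - w i| ≤ η) :
    (∑ i ∈ Sᶜ, w i - ∑ i ∈ S, w i) - Fintype.card ι * η ≤ ∑ i ∈ Sᶜ, v i - ∑ i ∈ S, v i := by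
  have hcompl : ∑ i ∈ Sᶜ, (w i - η) ≤ ∑ i ∈ Sᶜ, v i :=
    sum_le_sum fun i _ => by linarith [(abs_sub_le_iff.1 (h i)).2]
  have hS : ∑ i ∈ S, v i ≤ ∑ i ∈ S, (w i + η) :=
    sum_le_sum fun i _ => by linarith [(abs_sub_le_iff.1 (h i)).1]
  have hcard : (#S : ℝ) + #Sᶜ = Fintype.card ι := by exact_mod_cast card_add_card_compl S
  rw [sum_sub_distrib, sum_const, nsmul_eq_mul] at hcompl
  rw [sum_add_distrib, sum_const, nsmul_eq_mul] at hS
  rw [← hcard, add_mul]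
  linarith

theorem sum_compl_ite_one_zero {R : Type*} [AddCommMonoidWithOne R] (p : ι → Prop)
    [DecidablePred p] (S : Finset ι) :
    ∑ i ∈ Sᶜ, (if p i then (1 : R) else 0) = #{i | p i ∧ i ∉ S} := by
  rw [sum_boole]
  congr 2
  ext i
  simp [and_comm]

theorem sum_ite_one_zero {R : Type*} [AddCommMonoidWithOne R] (p : ι → Prop)
    [DecidablePred p] (S : Finset ι) :
    ∑ i ∈ S, (if p i then (1 : R) else 0) = #{i | p i ∧ i ∈ S} := by
  rw [sum_boole]
  congr 2
  ext i
  simp [and_comm]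

end Perturbation

theorem exists_strictAnti_near_of_antitone {α : Type*} [Preorder α] {r w : α → ℝ}
    (hr : StrictAnti r) (hr01 : ∀ a, r a ∈ Set.Icc (0 : ℝ) 1) (hw : Antitone w)
    (hw01 : ∀ a, w a ∈ Set.Icc (0 : ℝ) 1) {η : ℝ} (hη : 0 < η) (hη1 : η ≤ 1) :
    ∃ v : α → ℝ, StrictAnti v ∧ (∀ a, v a ∈ Set.Icc (0 : ℝ) 1) ∧ ∀ a, |v a - w a| ≤ η := by
  refine ⟨fun a => (1 - η) * w a + η * r a, ?_, fun a => ?_, fun a => ?_⟩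
  · exact (hw.const_mul (by linarith)).add_strictAnti (hr.const_mul hη)
  · obtain ⟨hr0, hr1⟩ := hr01 a
    obtain ⟨hw0, hw1⟩ := hw01 a
    constructor <;> nlinarith
  · obtain ⟨hr0, hr1⟩ := hr01 a
    obtain ⟨hw0, hw1⟩ := hw01 a
    have hrw : |r a - w a| ≤ 1 := abs_sub_le_iff.2 ⟨by linarith, by linarith⟩
    calc |(1 - η) * w a + η * r a - w a| = η * |r a - w a| := by
          rw [show (1 - η) * w a + η * r a - w a = η * (r a - w a) by ring, abs_mul,
            abs_of_pos hη]
      _ ≤ η := mul_le_of_le_one_right hη.le hrw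

theorem strictAnti_one_div_val_add_one (n : ℕ) :
    StrictAnti fun i : Fin n => 1 / ((i : ℝ) + 1) := fun i j hij =>
  one_div_lt_one_div_of_lt (by positivity) (by gcongr; exact_mod_cast hij)

theorem one_div_val_add_one_mem_Icc {n : ℕ} (i : Fin n) :
    1 / ((i : ℝ) + 1) ∈ Set.Icc (0 : ℝ) 1 :=
  ⟨by positivity, div_le_one_of_le₀ (le_add_of_nonneg_left (Nat.cast_nonneg _)) (by positivity)⟩

theorem antitone_ite_val_lt (n t : ℕ) :
    Antitone fun i : Fin n => if i.val < t then (1 : ℝ) else 0 := by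
  intro i j (hij : i.val ≤ j.val)
  dsimp only
  split_ifs <;> first | omega | norm_num

theorem stmt10 (n : ℕ) (S : Finset (Fin n)) (δ : ℝ) (hδ : 0 < δ) :
    ∃ v : Fin n → ℝ, StrictAnti v ∧ (∀ i, v i ∈ Set.Icc (0 : ℝ) 1) ∧
      (((Finset.range (n + 1)).sup' Finset.nonempty_range_add_one fun t =>
        ((Finset.univ.filter fun i : Fin n => i.val < t ∧ i ∉ S).card : ℤ)
          - ((Finset.univ.filter fun i : Fin n => i.val < t ∧ i ∈ S).card : ℤ)) : ℝ) - δ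
        ≤ (∑ i ∈ Sᶜ, v i) - ∑ i ∈ S, v i := by
  obtain ⟨t, -, ht⟩ := exists_mem_eq_sup' (nonempty_range_add_one (n := n)) fun t =>
    (((#{i : Fin n | i.val < t ∧ i ∉ S} : ℤ) : ℝ) - ((#{i : Fin n | i.val < t ∧ i ∈ S} : ℤ) : ℝ))
  set η := min 1 (δ / (n + 1))
  have hη : 0 < η := lt_min one_pos (by positivity)
  have hnη : n * η ≤ δ := calc
    n * η ≤ n * (δ / (n + 1)) := by gcongr; exact min_le_right _ _
    _ ≤ δ := by rw [mul_div_assoc', div_le_iff₀ (by positivity)]; nlinarith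
  obtain ⟨v, hv, hv01, hvw⟩ := exists_strictAnti_near_of_antitone
    (strictAnti_one_div_val_add_one n) one_div_val_add_one_mem_Icc (antitone_ite_val_lt n t)
    (fun i => by split_ifs <;> norm_num) hη (min_le_left _ _)
  refine ⟨v, hv, hv01, ?_⟩
  have hperturb := le_sum_compl_sub_sum_of_abs_sub_le S hvw
  rw [sum_compl_ite_one_zero, sum_ite_one_zero, Fintype.card_fin] at hperturb
  rw [ht]
  push_cast
  linarith
end

section
/- Let S ⊆ {1,...,n} and define the greedy cancellation procedure: initialize T = complement of S; iterate over i ∈ S in increasing index order (i.e., decreasing value), and at each step remove from T the smallest index j ∈ T with j > i (if one exists). Then the final size |T| equals max over t ∈ {0,...,n} of (|complement(S) ∩ [t]| - |S ∩ [t]|). -/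
/-! Let `D(t) = |T ∩ [t]| - |S ∩ [t]|`, for `T` the current set and `S` the items not yet
processed. Processing `i ∈ S`, which cancels `m ∈ T` (or nothing, say `m = n`), moves the `-1`
that `i` contributes to `D` from the positions `t > i` to the positions `t > m`. No element of `T`
lies strictly between `i` and `m`, so `D ≤ D(i)` on `(i, m]` and `max_t D` does not change. Once
`S` is exhausted, the maximum is attained at `t = n`, where it is the size of what is left. -/

/-- The greedy cancellation procedure: start with `T = Sᶜ`; iterate over the items of `S`
in increasing index order (decreasing value), each time removing from `T` the smallest
index `j ∈ T` with `j > i`, if one exists. -/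
def cancelT (n : ℕ) (S : Finset (Fin n)) : Finset (Fin n) :=
  (S.sort (· ≤ ·)).foldl
    (fun T i =>
      if h : (T.filter fun j => i < j).Nonempty then
        T.erase ((T.filter fun j => i < j).min' h)
      else T) Sᶜ

open Finset

theorem Finset.sup'_range_sub_ite_lt_eq {N i m : ℕ} (him : i ≤ m) (hiN : i ≤ N)
    (h : ℕ → ℤ) (hflat : ∀ t, i < t → t ≤ m → h t ≤ h i) :
    (range (N + 1)).sup' nonempty_range_add_one (fun t => h t - if m < t then 1 else 0) =
      (range (N + 1)).sup' nonempty_range_add_one (fun t => h t - if i < t then 1 else 0) := by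
  have hi : i ∈ range (N + 1) := mem_range.2 (Nat.lt_succ_of_le hiN)
  apply le_antisymm
  · refine sup'_le _ _ fun t ht => ?_
    by_cases hit : i < t
    · by_cases hmt : m < t
      · exact le_sup'_of_le _ ht (by simp [hit, hmt])
      · exact le_sup'_of_le _ hi (by simpa [hmt] using hflat t hit (not_lt.1 hmt))
    · exact le_sup'_of_le _ ht (by simp [hit, show ¬ m < t by omega])
  · refine sup'_le _ _ fun t ht => le_sup'_of_le _ ht ?_
    split_ifs <;> omega

namespace Cancellation

variable {n : ℕ}

def step (T : Finset (Fin n)) (i : Fin n) : Finset (Fin n) :=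
  if h : (T.filter fun j => i < j).Nonempty then
    T.erase ((T.filter fun j => i < j).min' h)
  else T

theorem step_subset (T : Finset (Fin n)) (i : Fin n) : step T i ⊆ T := by
  unfold step
  split_ifs
  exacts [erase_subset _ _, subset_rfl]

def countBelow (T : Finset (Fin n)) (t : ℕ) : ℕ := #{j ∈ T | j.val < t}

theorem countBelow_insert {T : Finset (Fin n)} {i : Fin n} (hi : i ∉ T) (t : ℕ) :
    countBelow (insert i T) t = countBelow T t + if i.val < t then 1 else 0 := by
  unfold countBelow
  rw [filter_insert]
  split_ifs with h
  · exact card_insert_of_notMem fun hmem => hi (mem_filter.1 hmem).1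
  · rfl

theorem countBelow_erase {T : Finset (Fin n)} {m : Fin n} (hm : m ∈ T) (t : ℕ) :
    (countBelow (T.erase m) t : ℤ) = countBelow T t - if m.val < t then 1 else 0 := by
  unfold countBelow
  rw [filter_erase]
  split_ifs with h
  · have hmem : m ∈ {j ∈ T | j.val < t} := mem_filter.2 ⟨hm, h⟩
    rw [card_erase_of_mem hmem, Nat.cast_sub (card_pos.2 ⟨m, hmem⟩), Nat.cast_one]
  · rw [erase_eq_of_notMem (by simp [h]), sub_zero]

theorem countBelow_mono (T : Finset (Fin n)) : Monotone (countBelow T) :=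
  fun _ _ hab => card_le_card fun _ hj =>
    mem_filter.2 ⟨(mem_filter.1 hj).1, lt_of_lt_of_le (mem_filter.1 hj).2 hab⟩

theorem countBelow_eq_of_forall {T : Finset (Fin n)} {a b : ℕ} (hab : a ≤ b)
    (h : ∀ j ∈ T, a ≤ j.val → b ≤ j.val) : countBelow T b = countBelow T a := by
  unfold countBelow
  congr 1
  ext j
  simp only [mem_filter, and_congr_right_iff]
  exact fun hj => ⟨fun hjb => by by_contra! hja; exact absurd (h j hj hja) (by omega), by omega⟩

theorem sup'_countBelow_eq_card (T : Finset (Fin n)) :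
    (range (n + 1)).sup' nonempty_range_add_one (fun t => (countBelow T t : ℤ)) = #T := by
  apply le_antisymm
  · exact sup'_le _ _ fun t _ => Nat.cast_le.2 (card_filter_le _ _)
  · refine le_sup'_of_le _ (self_mem_range_succ n) (le_of_eq ?_)
    rw [countBelow, filter_true_of_mem fun j _ => j.isLt]

theorem sup'_countBelow_step {T s : Finset (Fin n)} {i : Fin n} (hiT : i ∉ T) (his : i ∉ s) :
    (range (n + 1)).sup' nonempty_range_add_one
        (fun t => (countBelow (step T i) t : ℤ) - countBelow s t) =
      (range (n + 1)).sup' nonempty_range_add_one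
        (fun t => (countBelow T t : ℤ) - countBelow (insert i s) t) := by
  set h : ℕ → ℤ := fun t => countBelow T t - countBelow s t
  have hflat : ∀ {m : ℕ}, (∀ j ∈ T, i.val < j.val → m ≤ j.val) →
      ∀ t, i.val < t → t ≤ m → h t ≤ h i := by
    intro m hm t hit htm
    have hT : countBelow T t = countBelow T i :=
      countBelow_eq_of_forall hit.le fun j hj hij =>
        le_trans htm (hm j hj (lt_of_le_of_ne hij fun e => hiT (Fin.ext e ▸ hj)))
    have hs := countBelow_mono s hit.le
    simp only [h, hT]
    omega
  have hrhs : (range (n + 1)).sup' nonempty_range_add_one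
        (fun t => (countBelow T t : ℤ) - countBelow (insert i s) t) =
      (range (n + 1)).sup' nonempty_range_add_one (fun t => h t - if i.val < t then 1 else 0) :=
    sup'_congr _ rfl fun t _ => by simp only [h, countBelow_insert his]; push_cast; ring
  rw [hrhs]
  unfold step
  split_ifs with hne
  · set m := (T.filter fun j => i < j).min' hne
    obtain ⟨hmT, him⟩ := mem_filter.1 (min'_mem _ hne)
    rw [sup'_congr _ rfl fun t _ => by rw [countBelow_erase hmT, sub_right_comm]]
    exact sup'_range_sub_ite_lt_eq him.le i.isLt.le h
      (hflat fun j hj hij => min'_le _ j (mem_filter.2 ⟨hj, hij⟩))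
  · have hTlt : ∀ j ∈ T, i.val < j.val → n ≤ j.val :=
      fun j hj hij => absurd ⟨j, mem_filter.2 ⟨hj, hij⟩⟩ hne
    rw [← sup'_range_sub_ite_lt_eq i.isLt.le i.isLt.le h (hflat hTlt)]
    exact sup'_congr _ rfl fun t ht => by
      rw [if_neg (not_lt.2 (Nat.lt_succ_iff.1 (mem_range.1 ht))), sub_zero]

theorem card_foldl_step_sort {S T : Finset (Fin n)} (hST : Disjoint S T) :
    (#((S.sort (· ≤ ·)).foldl step T) : ℤ) =
      (range (n + 1)).sup' nonempty_range_add_one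
        (fun t => (countBelow T t : ℤ) - countBelow S t) := by
  induction S using Finset.induction_on_min generalizing T with
  | empty =>
    have hempty : ∀ t, countBelow (∅ : Finset (Fin n)) t = 0 := fun t => by simp [countBelow]
    simp only [sort_empty, List.foldl_nil, hempty, Nat.cast_zero, sub_zero,
      sup'_countBelow_eq_card]
  | insert i s hmin ih =>
    obtain ⟨hiT, hsT⟩ := disjoint_insert_left.1 hST
    have his : i ∉ s := fun h => lt_irrefl i (hmin i h)
    rw [sort_insert _ (fun j hj => (hmin j hj).le) his, List.foldl_cons,
      ih (disjoint_of_subset_right (step_subset T i) hsT), sup'_countBelow_step hiT his]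

end Cancellation

theorem stmt11 (n : ℕ) (S : Finset (Fin n)) :
    ((cancelT n S).card : ℤ) =
      (Finset.range (n + 1)).sup' Finset.nonempty_range_add_one fun t =>
        ((Finset.univ.filter fun i : Fin n => i.val < t ∧ i ∉ S).card : ℤ)
          - ((Finset.univ.filter fun i : Fin n => i.val < t ∧ i ∈ S).card : ℤ) := by
  have hfilter : ∀ (T : Finset (Fin n)) (t : ℕ),
      Cancellation.countBelow T t = #{i | i.val < t ∧ i ∈ T} := fun T t => by
    simp only [Cancellation.countBelow]
    congr 1
    ext
    simp [and_comm]
  rw [show cancelT n S = (S.sort (· ≤ ·)).foldl Cancellation.step Sᶜ from rfl,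
    Cancellation.card_foldl_step_sort disjoint_compl_right]
  simp only [hfilter, mem_compl]
end
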